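/- The function f(y, v*) = det(v*B_{n-1}(y); v*B_{n-2}(y); …; v*) is invariant under the translation part of the affine coadjoint action: f(y + u v*, v*) = f(y, v*) for all u ∈ M_{n,1}(ℂ). -/

import Mathlib

open Matrix BigOperators

/-! Put `x = y + u v*`. For every row vector `r`, `r x - r y` is a multiple of `v*`, and the rows
satisfy `v* B_{k+1}(y) = (v* B_k(y)) y - p_{k+1}(y) v*`. By induction on `k`, `v* B_k(x) - v* B_k(y)`
therefore lies in the span of `v* B_0(y), …, v* B_{k-1}(y)`, i.e. of the rows below it in the
determinant, so the two matrices differ by a unitriangular change of rows. -/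

/-- The signed coefficients of the characteristic polynomial:
`det (t•I - x) = t^n - p 1 x * t^(n-1) - ⋯ - p n x`. -/
noncomputable def charCoeff (n : ℕ) (k : ℕ) (x : Matrix (Fin n) (Fin n) ℂ) : ℂ :=
  -(x.charpoly.coeff (n - k))

/-- `B n k x = x^k - p 1 x • x^(k-1) - ⋯ - p k x • I`. -/
noncomputable def gradB (n : ℕ) (k : ℕ) (x : Matrix (Fin n) (Fin n) ℂ) :
    Matrix (Fin n) (Fin n) ℂ :=
  x ^ k - ∑ i ∈ Finset.Icc 1 k, charCoeff n i x • x ^ (k - i)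

/-- The semi-invariant `f(y, v*) = det (v* B_{n-1}(y); v* B_{n-2}(y); …; v* B_0(y))`. -/
noncomputable def fInv (n : ℕ) (y : Matrix (Fin n) (Fin n) ℂ)
    (vstar : Matrix (Fin 1) (Fin n) ℂ) : ℂ :=
  Matrix.det (Matrix.of fun i j : Fin n => (vstar * gradB n (n - 1 - (i : ℕ)) y) 0 j)

theorem Matrix.det_of_eq_of_forall_sub_mem_span_Ioi {R ι : Type*} [CommRing R] [Fintype ι]
    [LinearOrder ι] {a b : ι → ι → R}
    (h : ∀ i, a i - b i ∈ Submodule.span R (b '' Set.Ioi i)) : (of a).det = (of b).det := by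
  choose c hc_supp hc using fun i => (Finsupp.mem_span_image_iff_linearCombination R).1 (h i)
  have hc_zero : ∀ i j, j ≤ i → c i j = 0 := fun i j hji =>
    (Finsupp.mem_supported' R _).1 (hc_supp i) j (not_lt.2 hji)
  refine det_eq_of_eq_det_one_mul (1 + of fun i j => c i j) ?_ ?_
  · rw [det_of_isUpperTriangular]
    · simp [hc_zero]
    · intro i j hji
      have hij : i ≠ j := hji.ne'
      simp [hij, hc_zero i j hji.le]
  · ext i j
    have hij := congrFun (hc i) j
    rw [Finsupp.linearCombination_apply, Finsupp.sum_fintype _ _ (by simp)] at hij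
    simp only [Finset.sum_apply, Pi.smul_apply, smul_eq_mul, Pi.sub_apply] at hij
    rw [Matrix.add_mul, Matrix.one_mul, add_apply, mul_apply]
    simp only [of_apply, hij, add_sub_cancel]

lemma gradB_zero (n : ℕ) (x : Matrix (Fin n) (Fin n) ℂ) : gradB n 0 x = 1 := by
  simp [gradB]

lemma gradB_succ (n k : ℕ) (x : Matrix (Fin n) (Fin n) ℂ) :
    gradB n (k + 1) x = gradB n k x * x - charCoeff n (k + 1) x • 1 := by
  have hIcc : Finset.Icc 1 (k + 1) = insert (k + 1) (Finset.Icc 1 k) := by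
    ext a; simp; omega
  have hshift : ∀ i ∈ Finset.Icc 1 k,
      charCoeff n i x • x ^ (k - i) * x = charCoeff n i x • x ^ (k + 1 - i) := by
    intro i hi
    rw [smul_mul_assoc, ← pow_succ, Nat.sub_add_comm (Finset.mem_Icc.mp hi).2]
  rw [gradB, gradB, hIcc, Finset.sum_insert (by simp), sub_mul, Finset.sum_mul,
    Finset.sum_congr rfl hshift, ← pow_succ, Nat.sub_self, pow_zero]
  abel

section KrylovRows

variable {n : ℕ} (w : Fin n → ℂ)

lemma vecMul_gradB_succ (x : Matrix (Fin n) (Fin n) ℂ) (k : ℕ) :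
    w ᵥ* gradB n (k + 1) x = w ᵥ* gradB n k x ᵥ* x - charCoeff n (k + 1) x • w := by
  rw [gradB_succ, vecMul_sub, vecMul_smul, vecMul_one, vecMul_vecMul]

noncomputable def gradBRowSpan (y : Matrix (Fin n) (Fin n) ℂ) (k : ℕ) :
    Submodule ℂ (Fin n → ℂ) :=
  Submodule.span ℂ ((fun j => w ᵥ* gradB n j y) '' Set.Iio k)

variable {w}

lemma vecMul_gradB_mem_gradBRowSpan (y : Matrix (Fin n) (Fin n) ℂ) {j k : ℕ} (hjk : j < k) :
    w ᵥ* gradB n j y ∈ gradBRowSpan w y k :=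
  Submodule.subset_span ⟨j, hjk, rfl⟩

lemma mem_gradBRowSpan_self (y : Matrix (Fin n) (Fin n) ℂ) {k : ℕ} (hk : 0 < k) :
    w ∈ gradBRowSpan w y k := by
  simpa [gradB_zero] using vecMul_gradB_mem_gradBRowSpan y hk

lemma vecMul_mem_gradBRowSpan_succ (y : Matrix (Fin n) (Fin n) ℂ) {k : ℕ} {r : Fin n → ℂ}
    (hr : r ∈ gradBRowSpan w y k) : r ᵥ* y ∈ gradBRowSpan w y (k + 1) := by
  suffices (gradBRowSpan w y k).map y.vecMulLinear ≤ gradBRowSpan w y (k + 1) from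
    this (Submodule.mem_map_of_mem hr)
  rw [gradBRowSpan, Submodule.map_span, Submodule.span_le]
  rintro _ ⟨_, ⟨j, hj, rfl⟩, rfl⟩
  have hstep : w ᵥ* gradB n j y ᵥ* y = w ᵥ* gradB n (j + 1) y + charCoeff n (j + 1) y • w := by
    rw [vecMul_gradB_succ, sub_add_cancel]
  rw [vecMulLinear_apply, hstep]
  exact add_mem (vecMul_gradB_mem_gradBRowSpan y (by simpa using hj))
    (Submodule.smul_mem _ _ (mem_gradBRowSpan_self y k.succ_pos))

theorem vecMul_gradB_sub_mem_gradBRowSpan {x y : Matrix (Fin n) (Fin n) ℂ}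
    (hxy : ∀ r, r ᵥ* x - r ᵥ* y ∈ ℂ ∙ w) (k : ℕ) :
    w ᵥ* gradB n k x - w ᵥ* gradB n k y ∈ gradBRowSpan w y k := by
  induction k with
  | zero => simp [gradB_zero]
  | succ k ih =>
    set r := w ᵥ* gradB n k x
    have hdiff : w ᵥ* gradB n (k + 1) x - w ᵥ* gradB n (k + 1) y =
        (r - w ᵥ* gradB n k y) ᵥ* y + (r ᵥ* x - r ᵥ* y) -
          (charCoeff n (k + 1) x - charCoeff n (k + 1) y) • w := by
      rw [vecMul_gradB_succ, vecMul_gradB_succ, sub_vecMul, sub_smul]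
      abel
    have hw : ℂ ∙ w ≤ gradBRowSpan w y (k + 1) :=
      (Submodule.span_singleton_le_iff_mem _ _).2 (mem_gradBRowSpan_self y k.succ_pos)
    rw [hdiff]
    exact sub_mem (add_mem (vecMul_mem_gradBRowSpan_succ y ih) (hw (hxy r)))
      (Submodule.smul_mem _ _ (mem_gradBRowSpan_self y k.succ_pos))

end KrylovRows

lemma vecMul_add_mul_sub_mem_span {n : ℕ} (y : Matrix (Fin n) (Fin n) ℂ)
    (u : Matrix (Fin n) (Fin 1) ℂ) (vstar : Matrix (Fin 1) (Fin n) ℂ) (r : Fin n → ℂ) :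
    r ᵥ* (y + u * vstar) - r ᵥ* y ∈ ℂ ∙ vstar 0 := by
  refine Submodule.mem_span_singleton.2 ⟨(r ᵥ* u) 0, ?_⟩
  rw [vecMul_add, add_sub_cancel_left, ← vecMul_vecMul, vecMul_eq_sum (r ᵥ* u), Fin.sum_univ_one]

/-- `f(y + u v*, v*) = f(y, v*)`: invariance under the translation part. -/
theorem stmt6 (n : ℕ) (y : Matrix (Fin n) (Fin n) ℂ) (vstar : Matrix (Fin 1) (Fin n) ℂ)
    (u : Matrix (Fin n) (Fin 1) ℂ) :
    fInv n (y + u * vstar) vstar = fInv n y vstar := by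
  refine det_of_eq_of_forall_sub_mem_span_Ioi fun i => ?_
  refine Submodule.span_mono ?_
    (vecMul_gradB_sub_mem_gradBRowSpan (vecMul_add_mul_sub_mem_span y u vstar) (n - 1 - i))
  rintro _ ⟨j, hj, rfl⟩
  have hjn : j < n - 1 - i := hj
  refine ⟨⟨n - 1 - j, by omega⟩, by simp only [Set.mem_Ioi, Fin.lt_def]; omega, ?_⟩
  simp only [show n - 1 - (n - 1 - j) = j by omega]
  rfl
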